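/- Let R be a commutative ring, J an ideal of R with ⋂_{n≥0} Jⁿ = 0, and let B be a square matrix over R of the form B = 1 - C where every entry of C lies in J. Then for any column vector v over R, B v = 0 implies v = 0. -/
import Mathlib


theorem stmt_0 {R : Type*} [CommRing R] (J : Ideal R)
    (hJ : (⨅ n : ℕ, J ^ n) = ⊥) {n : ℕ} (C : Matrix (Fin n) (Fin n) R)
    (hC : ∀ i j, C i j ∈ J) (B : Matrix (Fin n) (Fin n) R) (hB : B = 1 - C)
    (v : Fin n → R) (hv : B.mulVec v = 0) : v = 0 := by
  subst hB
  have hvC : v = C.mulVec v := by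
    have := hv
    rw [Matrix.sub_mulVec, Matrix.one_mulVec, sub_eq_zero] at this
    exact this
  have hpow : ∀ k : ℕ, v = (C ^ k).mulVec v := by
    intro k
    induction k with
    | zero => simp
    | succ k ih =>
      rw [pow_succ, ← Matrix.mulVec_mulVec, ← hvC]
      exact ih
  have hent : ∀ k : ℕ, ∀ i j, (C ^ k) i j ∈ J ^ k := by
    intro k
    induction k with
    | zero => intro i j; simp
    | succ k ih =>
      intro i j
      rw [pow_succ C k, Matrix.mul_apply]
      exact Submodule.sum_mem _ fun l _ =>
        (pow_succ J k) ▸ Ideal.mul_mem_mul (ih i l) (hC l j)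
  funext i
  have hmem : ∀ k : ℕ, v i ∈ J ^ k := by
    intro k
    rw [hpow k]
    unfold Matrix.mulVec dotProduct
    exact Submodule.sum_mem _ fun j _ => Ideal.mul_mem_right _ _ (hent k i j)
  have : v i ∈ (⨅ n : ℕ, J ^ n) := Ideal.mem_iInf.mpr hmem
  rw [hJ] at this
  simpa using this
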